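/- arXiv:2411.04559 — 5 statements merged into one kernel-verified Lean document; each statement's English description precedes it below -/
import Mathlib

section
/- Let R be a commutative ring and c, z ∈ R. Let E₃₂ denote the 4×4 matrix with a single nonzero entry 1 in position (3,2). Then (I + c·E₃₂)·n(z,0,0) = n(z, c·z, 0)·(I + c·E₃₂). -/
open Matrix

noncomputable section

/-- The unipotent matrix `n(z,a,b)`. -/
def nmat {R : Type*} [CommRing R] (z a b : R) : Matrix (Fin 4) (Fin 4) R :=
  !![1, 0, 0, 0;
     z, 1, 0, 0;
     a, 0, 1, 0;
     b, a, -z, 1]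

/-- The elementary matrix `E₃₂` with a single nonzero entry `1` in position (3,2). -/
def E32 (R : Type*) [CommRing R] : Matrix (Fin 4) (Fin 4) R :=
  Matrix.single 2 1 1

theorem one_add_smul_E32 {R : Type*} [CommRing R] (c : R) :
    1 + c • E32 R = !![1, 0, 0, 0; 0, 1, 0, 0; 0, c, 1, 0; 0, 0, 0, 1] := by
  ext i j
  fin_cases i <;> fin_cases j <;> simp [E32]

theorem stmt3 {R : Type*} [CommRing R] (c z : R) :
    (1 + c • E32 R) * nmat z 0 0 = nmat z (c * z) 0 * (1 + c • E32 R) := by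
  rw [one_add_smul_E32]
  ext i j
  fin_cases i <;> fin_cases j <;> simp [nmat, Matrix.mul_apply, Fin.sum_univ_four, mul_comm]
end
end

section
/- Let R be a commutative ring, let z, a, b, z′, a′, b′ ∈ R, and let x, x′ ∈ GL₄(R) be invertible matrices whose entries at positions (2,1), (3,1), (4,1), (4,2), (4,3) are all zero. If n(z,a,b)·x = n(z′,a′,b′)·x′, then z = z′, a = a′, b = b′ and x = x′. -/
open Matrix

noncomputable section

theorem stmt4 {R : Type*} [CommRing R] (z a b z' a' b' : R)
    (x x' : Matrix (Fin 4) (Fin 4) R)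
    (hx : IsUnit x) (hx' : IsUnit x')
    -- x has zero entries at positions (2,1), (3,1), (4,1), (4,2), (4,3)
    (hx21 : x 1 0 = 0) (hx31 : x 2 0 = 0) (hx41 : x 3 0 = 0)
    (hx42 : x 3 1 = 0) (hx43 : x 3 2 = 0)
    -- x' has zero entries at positions (2,1), (3,1), (4,1), (4,2), (4,3)
    (hx'21 : x' 1 0 = 0) (hx'31 : x' 2 0 = 0) (hx'41 : x' 3 0 = 0)
    (hx'42 : x' 3 1 = 0) (hx'43 : x' 3 2 = 0)
    (h : nmat z a b * x = nmat z' a' b' * x') :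
    z = z' ∧ a = a' ∧ b = b' ∧ x = x' := by
  have hdet : IsUnit x.det := (Matrix.isUnit_iff_isUnit_det x).mp hx
  have hd : x.det = x 0 0 * (x 3 3 * (x 1 1 * x 2 2 - x 1 2 * x 2 1)) := by
    have e1 : (Fin.succ 2 : Fin 4) = 3 := rfl
    have e2 : ((2 : Fin 4).succAbove 2) = 3 := rfl
    have e3 : ((1 : Fin 4).succAbove 2) = 3 := rfl
    have e4 : (Fin.castSucc 2 : Fin 4) = 2 := rfl
    simp [Matrix.det_succ_row_zero, Fin.sum_univ_succ, hx21, hx31, hx41, hx42, hx43,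
      e1, e2, e3, e4]
    ring
  rw [hd] at hdet
  have hu : IsUnit (x 0 0) := isUnit_of_mul_isUnit_left hdet
  have h00 : x 0 0 = x' 0 0 := by
    have := congrFun (congrFun h 0) 0
    simpa [nmat, Matrix.mul_apply, Fin.sum_univ_four] using this
  have h10 : z * x 0 0 = z' * x' 0 0 := by
    have := congrFun (congrFun h 1) 0
    simpa [nmat, Matrix.mul_apply, Fin.sum_univ_four, hx21, hx'21] using this
  have h20 : a * x 0 0 = a' * x' 0 0 := by
    have := congrFun (congrFun h 2) 0
    simpa [nmat, Matrix.mul_apply, Fin.sum_univ_four, hx31, hx'31] using this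
  have h30 : b * x 0 0 = b' * x' 0 0 := by
    have := congrFun (congrFun h 3) 0
    simpa [nmat, Matrix.mul_apply, Fin.sum_univ_four, hx21, hx31, hx41, hx'21, hx'31, hx'41]
      using this
  rw [← h00] at h10 h20 h30
  have hz : z = z' := hu.mul_right_cancel h10
  have ha : a = a' := hu.mul_right_cancel h20
  have hb : b = b' := hu.mul_right_cancel h30
  refine ⟨hz, ha, hb, ?_⟩
  subst hz ha hb
  have hn : IsUnit (nmat z a b) := by
    rw [Matrix.isUnit_iff_isUnit_det]
    have : (nmat z a b).det = 1 := by simp [nmat, Matrix.det_succ_row_zero, Fin.sum_univ_succ]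
    rw [this]; exact isUnit_one
  exact hn.mul_left_cancel h
end
end

section
/- Let p be a prime and n, β ≥ 1 integers. Let u ∈ GSp₄(ℤ_p) satisfy u ≡ I (mod pⁿ), and let m ∈ GSp₄(ℤ_p) be block diagonal (that is, m₁₃ = m₁₄ = m₂₃ = m₂₄ = m₃₁ = m₃₂ = m₄₁ = m₄₂ = 0) with m₂₁ ≡ m₄₃ ≡ 0 (mod p^β). Then there exist unique z ∈ p^{min(n,β)}·ℤ_p, a, b ∈ pⁿ·ℤ_p, and x ∈ GSp₄(ℤ_p) with x₂₁ = x₃₁ = x₄₁ = x₄₂ = x₄₃ = 0, such that u·m = n(z,a,b)·x. -/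
open Matrix

noncomputable section

/-- The symplectic form matrix `J`. -/
def Jmat (R : Type*) [CommRing R] : Matrix (Fin 4) (Fin 4) R :=
  !![0, 0, 0, 1;
     0, 0, 1, 0;
     0, -1, 0, 0;
     -1, 0, 0, 0]

/-- Membership in `GSp₄(R)`: `gᵀ J g = s • J` for some unit `s`. -/
def IsGSp4 {R : Type*} [CommRing R] (g : Matrix (Fin 4) (Fin 4) R) : Prop :=
  ∃ s : Rˣ, gᵀ * Jmat R * g = (s : R) • Jmat R


/-!
Put g = u·m (indices 1-based here, 0-based in the code). As m₃₁ = m₄₁ = 0, the first column of g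
is u applied to (m₁₁, m₂₁, 0, 0)ᵀ, so g₂₁ ∈ p^{min(n,β)}ℤ_p and g₃₁, g₄₁ ∈ pⁿℤ_p. The (1,4) entry
of gᵀJg = sJ reads g₁₁g₄₄ + (an element of pℤ_p) = s, so g₁₁ is a unit. Over any commutative ring,
a g with g₁₁ a unit factors uniquely as n(z,a,b)·x with x₂₁ = x₃₁ = x₄₁ = 0, namely
(z, a, b) = (g₂₁, g₃₁, g₄₁)/g₁₁. Since n(z,a,b) is symplectic, x lies in GSp₄, and the (1,2), (1,3)
entries of xᵀJx = sJ give x₁₁x₄₂ = x₁₁x₄₃ = 0.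
-/

section CommRing

variable {R : Type*} [CommRing R]

lemma nmat_mul_apply_zero (z a b : R) (x : Matrix (Fin 4) (Fin 4) R) (j : Fin 4) :
    (nmat z a b * x) 0 j = x 0 j := by
  simp [nmat, Matrix.mul_apply, Fin.sum_univ_four]

lemma nmat_mul_apply_one (z a b : R) (x : Matrix (Fin 4) (Fin 4) R) (j : Fin 4) :
    (nmat z a b * x) 1 j = z * x 0 j + x 1 j := by
  simp [nmat, Matrix.mul_apply, Fin.sum_univ_four]

lemma nmat_mul_apply_two (z a b : R) (x : Matrix (Fin 4) (Fin 4) R) (j : Fin 4) :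
    (nmat z a b * x) 2 j = a * x 0 j + x 2 j := by
  simp [nmat, Matrix.mul_apply, Fin.sum_univ_four]

lemma nmat_mul_apply_three (z a b : R) (x : Matrix (Fin 4) (Fin 4) R) (j : Fin 4) :
    (nmat z a b * x) 3 j = b * x 0 j + a * x 1 j - z * x 2 j + x 3 j := by
  simp [nmat, Matrix.mul_apply, Fin.sum_univ_four]; ring

lemma nmat_mul_nmat (z a b z' a' b' : R) :
    nmat z a b * nmat z' a' b' = nmat (z + z') (a + a') (b + b' + a * z' - z * a') := by
  ext i j
  fin_cases i <;> fin_cases j <;> simp [nmat, Matrix.mul_apply, Fin.sum_univ_four] <;> ring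

lemma nmat_zero : nmat (0 : R) 0 0 = 1 := by
  ext i j
  fin_cases i <;> fin_cases j <;> simp [nmat]

lemma nmat_mul_nmat_neg (z a b : R) : nmat z a b * nmat (-z) (-a) (-b) = 1 := by
  rw [nmat_mul_nmat, ← nmat_zero]
  congr 1 <;> ring

lemma nmat_neg_mul_nmat (z a b : R) : nmat (-z) (-a) (-b) * nmat z a b = 1 := by
  simpa using nmat_mul_nmat_neg (-z) (-a) (-b)

lemma nmat_transpose_mul_Jmat_mul_nmat (z a b : R) :
    (nmat z a b)ᵀ * Jmat R * nmat z a b = Jmat R := by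
  ext i j
  fin_cases i <;> fin_cases j <;> simp [nmat, Jmat, Matrix.mul_apply, Fin.sum_univ_four]
  ring

lemma transpose_mul_Jmat_mul_apply (g : Matrix (Fin 4) (Fin 4) R) (i j : Fin 4) :
    (gᵀ * Jmat R * g) i j = g 0 i * g 3 j + g 1 i * g 2 j - g 2 i * g 1 j - g 3 i * g 0 j := by
  simp [Jmat, Matrix.mul_apply, Fin.sum_univ_four]; ring

lemma IsGSp4.mul {g h : Matrix (Fin 4) (Fin 4) R} (hg : IsGSp4 g) (hh : IsGSp4 h) :
    IsGSp4 (g * h) := by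
  obtain ⟨s, hs⟩ := hg
  obtain ⟨t, ht⟩ := hh
  refine ⟨s * t, ?_⟩
  calc (g * h)ᵀ * Jmat R * (g * h) = hᵀ * (gᵀ * Jmat R * g) * h := by
        simp only [Matrix.transpose_mul, Matrix.mul_assoc]
    _ = _ := by rw [hs, Matrix.mul_smul, Matrix.smul_mul, ht, smul_smul, Units.val_mul]

lemma isGSp4_nmat (z a b : R) : IsGSp4 (nmat z a b) :=
  ⟨1, by rw [nmat_transpose_mul_Jmat_mul_nmat, Units.val_one, one_smul]⟩

lemma isGSp4_nmat_mul_iff {z a b : R} {x : Matrix (Fin 4) (Fin 4) R} :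
    IsGSp4 (nmat z a b * x) ↔ IsGSp4 x := by
  refine ⟨fun h => ?_, (isGSp4_nmat z a b).mul⟩
  simpa [← Matrix.mul_assoc, nmat_neg_mul_nmat] using (isGSp4_nmat (-z) (-a) (-b)).mul h

lemma IsGSp4.apply_three_eq_zero {x : Matrix (Fin 4) (Fin 4) R} (hx : IsGSp4 x)
    (h10 : x 1 0 = 0) (h20 : x 2 0 = 0) (h30 : x 3 0 = 0) (h00 : IsUnit (x 0 0)) :
    x 3 1 = 0 ∧ x 3 2 = 0 := by
  obtain ⟨s, hs⟩ := hx
  have hJ : ∀ j, x 0 0 * x 3 j = (s : R) * Jmat R 0 j := fun j => by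
    simpa [transpose_mul_Jmat_mul_apply, h10, h20, h30] using congrFun (congrFun hs 0) j
  exact ⟨h00.mul_right_eq_zero.1 (by simpa [Jmat] using hJ 1),
    h00.mul_right_eq_zero.1 (by simpa [Jmat] using hJ 2)⟩

lemma eq_nmat_mul_iff {g x : Matrix (Fin 4) (Fin 4) R} {z a b : R} :
    (g = nmat z a b * x ∧ x 1 0 = 0 ∧ x 2 0 = 0 ∧ x 3 0 = 0) ↔
      (g 1 0 = z * g 0 0 ∧ g 2 0 = a * g 0 0 ∧ g 3 0 = b * g 0 0 ∧
        x = nmat (-z) (-a) (-b) * g) := by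
  constructor
  · rintro ⟨rfl, h10, h20, h30⟩
    refine ⟨?_, ?_, ?_, by rw [← Matrix.mul_assoc, nmat_neg_mul_nmat, Matrix.one_mul]⟩ <;>
      simp only [nmat_mul_apply_zero, nmat_mul_apply_one, nmat_mul_apply_two,
        nmat_mul_apply_three, h10, h20, h30] <;> ring
  · rintro ⟨h10, h20, h30, rfl⟩
    refine ⟨by rw [← Matrix.mul_assoc, nmat_mul_nmat_neg, Matrix.one_mul], ?_, ?_, ?_⟩ <;>
      simp only [nmat_mul_apply_one, nmat_mul_apply_two, nmat_mul_apply_three, h10, h20, h30] <;>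
      ring

lemma existsUnique_nmat_mul {g : Matrix (Fin 4) (Fin 4) R} (hg : IsUnit (g 0 0)) :
    ∃! w : R × R × R × Matrix (Fin 4) (Fin 4) R,
      g = nmat w.1 w.2.1 w.2.2.1 * w.2.2.2 ∧
        w.2.2.2 1 0 = 0 ∧ w.2.2.2 2 0 = 0 ∧ w.2.2.2 3 0 = 0 := by
  obtain ⟨c, hc⟩ := hg
  refine ⟨(g 1 0 * ↑c⁻¹, g 2 0 * ↑c⁻¹, g 3 0 * ↑c⁻¹,
      nmat (-(g 1 0 * ↑c⁻¹)) (-(g 2 0 * ↑c⁻¹)) (-(g 3 0 * ↑c⁻¹)) * g),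
    eq_nmat_mul_iff.2 ⟨?_, ?_, ?_, rfl⟩, ?_⟩
  · rw [← hc, Units.inv_mul_cancel_right]
  · rw [← hc, Units.inv_mul_cancel_right]
  · rw [← hc, Units.inv_mul_cancel_right]
  rintro ⟨z, a, b, x⟩ hw
  dsimp only at hw
  obtain ⟨h10, h20, h30, rfl⟩ := eq_nmat_mul_iff.1 hw
  simp only [h10, h20, h30, ← hc, Units.mul_inv_cancel_right]

end CommRing

lemma IsGSp4.isUnit_apply_zero_zero {R : Type*} [CommRing R] [IsLocalRing R]
    {g : Matrix (Fin 4) (Fin 4) R} (hg : IsGSp4 g) (h10 : g 1 0 ∈ IsLocalRing.maximalIdeal R)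
    (h20 : g 2 0 ∈ IsLocalRing.maximalIdeal R) (h30 : g 3 0 ∈ IsLocalRing.maximalIdeal R) :
    IsUnit (g 0 0) := by
  obtain ⟨s, hs⟩ := hg
  have h03 : g 0 0 * g 3 3 + (g 1 0 * g 2 3 - g 2 0 * g 1 3 - g 3 0 * g 0 3) = s := by
    have := congrFun (congrFun hs 0) 3
    rw [transpose_mul_Jmat_mul_apply] at this
    simpa [Jmat, add_sub_assoc] using this
  have hrest : g 1 0 * g 2 3 - g 2 0 * g 1 3 - g 3 0 * g 0 3 ∈ IsLocalRing.maximalIdeal R :=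
    Ideal.sub_mem _ (Ideal.sub_mem _ (Ideal.mul_mem_right _ _ h10) (Ideal.mul_mem_right _ _ h20))
      (Ideal.mul_mem_right _ _ h30)
  rcases IsLocalRing.isUnit_or_isUnit_of_isUnit_add (h03 ▸ s.isUnit) with h | h
  · exact isUnit_of_mul_isUnit_left h
  · exact absurd hrest (IsLocalRing.notMem_maximalIdeal.2 h)

lemma PadicInt.mem_maximalIdeal_of_pow_dvd {p : ℕ} [Fact p.Prime] {k : ℕ} (hk : k ≠ 0)
    {x : ℤ_[p]} (hx : (p : ℤ_[p]) ^ k ∣ x) : x ∈ IsLocalRing.maximalIdeal ℤ_[p] := by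
  rw [PadicInt.maximalIdeal_eq_span_p, Ideal.mem_span_singleton]
  exact (dvd_pow_self _ hk).trans hx

theorem stmt5_general (p : ℕ) [Fact p.Prime] (n β : ℕ) (hn : 1 ≤ n) (hβ : 1 ≤ β)
    (u m : Matrix (Fin 4) (Fin 4) ℤ_[p])
    (hu : IsGSp4 u)
    -- u ≡ I (mod pⁿ)
    (hucong : ∀ i j, (p : ℤ_[p]) ^ n ∣ (u - 1) i j)
    (hm : IsGSp4 m)
    -- m is block diagonal
    (hm31 : m 2 0 = 0) (hm41 : m 3 0 = 0)
    -- m₂₁ ≡ m₄₃ ≡ 0 (mod p^β)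
    (hm21 : (p : ℤ_[p]) ^ β ∣ m 1 0) :
    ∃! w : ℤ_[p] × ℤ_[p] × ℤ_[p] × Matrix (Fin 4) (Fin 4) ℤ_[p],
      (p : ℤ_[p]) ^ (min n β) ∣ w.1 ∧
      (p : ℤ_[p]) ^ n ∣ w.2.1 ∧
      (p : ℤ_[p]) ^ n ∣ w.2.2.1 ∧
      IsGSp4 w.2.2.2 ∧
      w.2.2.2 1 0 = 0 ∧ w.2.2.2 2 0 = 0 ∧ w.2.2.2 3 0 = 0 ∧
      w.2.2.2 3 1 = 0 ∧ w.2.2.2 3 2 = 0 ∧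
      u * m = nmat w.1 w.2.1 w.2.2.1 * w.2.2.2 := by
  have hu_off : ∀ i j, i ≠ j → (p : ℤ_[p]) ^ n ∣ u i j := fun i j hij => by
    simpa [Matrix.one_apply_ne hij] using hucong i j
  have hcol : ∀ i, (u * m) i 0 = u i 0 * m 0 0 + u i 1 * m 1 0 := fun i => by
    simp [Matrix.mul_apply, Fin.sum_univ_four, hm31, hm41]
  have hg10 : (p : ℤ_[p]) ^ min n β ∣ (u * m) 1 0 := hcol 1 ▸
    dvd_add (((pow_dvd_pow _ (min_le_left n β)).trans (hu_off 1 0 (by decide))).mul_right _)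
      (((pow_dvd_pow _ (min_le_right n β)).trans hm21).mul_left _)
  have hg_low : ∀ i, i ≠ 0 → i ≠ 1 → (p : ℤ_[p]) ^ n ∣ (u * m) i 0 := fun i hi0 hi1 => hcol i ▸
    dvd_add ((hu_off i 0 hi0).mul_right _) ((hu_off i 1 hi1).mul_right _)
  have hg : IsGSp4 (u * m) := hu.mul hm
  have hunit : IsUnit ((u * m) 0 0) := hg.isUnit_apply_zero_zero
    (PadicInt.mem_maximalIdeal_of_pow_dvd (by omega) hg10)
    (PadicInt.mem_maximalIdeal_of_pow_dvd (by omega) (hg_low 2 (by decide) (by decide)))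
    (PadicInt.mem_maximalIdeal_of_pow_dvd (by omega) (hg_low 3 (by decide) (by decide)))
  obtain ⟨⟨z, a, b, x⟩, hw, huniq⟩ := existsUnique_nmat_mul hunit
  obtain ⟨hz, ha, hb, -⟩ := eq_nmat_mul_iff.1 hw
  obtain ⟨hfac, h10, h20, h30⟩ := hw
  have hx : IsGSp4 x := isGSp4_nmat_mul_iff.1 (hfac ▸ hg)
  have hx00 : x 0 0 = (u * m) 0 0 := by rw [hfac, nmat_mul_apply_zero]
  obtain ⟨h31, h32⟩ := hx.apply_three_eq_zero h10 h20 h30 (hx00 ▸ hunit)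
  refine ⟨(z, a, b, x), ⟨hunit.dvd_mul_right.1 (hz ▸ hg10),
    hunit.dvd_mul_right.1 (ha ▸ hg_low 2 (by decide) (by decide)),
    hunit.dvd_mul_right.1 (hb ▸ hg_low 3 (by decide) (by decide)),
    hx, h10, h20, h30, h31, h32, hfac⟩, ?_⟩
  rintro w ⟨-, -, -, -, h10', h20', h30', -, -, hfac'⟩
  exact huniq w ⟨hfac', h10', h20', h30'⟩

theorem stmt5 (p : ℕ) [Fact p.Prime] (n β : ℕ) (hn : 1 ≤ n) (hβ : 1 ≤ β)
    (u m : Matrix (Fin 4) (Fin 4) ℤ_[p])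
    (hu : IsGSp4 u)
    -- u ≡ I (mod pⁿ)
    (hucong : ∀ i j, (p : ℤ_[p]) ^ n ∣ (u - 1) i j)
    (hm : IsGSp4 m)
    -- m is block diagonal
    (hm13 : m 0 2 = 0) (hm14 : m 0 3 = 0) (hm23 : m 1 2 = 0) (hm24 : m 1 3 = 0)
    (hm31 : m 2 0 = 0) (hm32 : m 2 1 = 0) (hm41 : m 3 0 = 0) (hm42 : m 3 1 = 0)
    -- m₂₁ ≡ m₄₃ ≡ 0 (mod p^β)
    (hm21 : (p : ℤ_[p]) ^ β ∣ m 1 0) (hm43 : (p : ℤ_[p]) ^ β ∣ m 3 2) :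
    ∃! w : ℤ_[p] × ℤ_[p] × ℤ_[p] × Matrix (Fin 4) (Fin 4) ℤ_[p],
      (p : ℤ_[p]) ^ (min n β) ∣ w.1 ∧
      (p : ℤ_[p]) ^ n ∣ w.2.1 ∧
      (p : ℤ_[p]) ^ n ∣ w.2.2.1 ∧
      IsGSp4 w.2.2.2 ∧
      w.2.2.2 1 0 = 0 ∧ w.2.2.2 2 0 = 0 ∧ w.2.2.2 3 0 = 0 ∧
      w.2.2.2 3 1 = 0 ∧ w.2.2.2 3 2 = 0 ∧
      u * m = nmat w.1 w.2.1 w.2.2.1 * w.2.2.2 :=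
  stmt5_general p n β hn hβ u m hu hucong hm hm31 hm41 hm21
end
end

section
/- Let p be a prime and β ≥ 1 an integer. Let h₁ = (a,b;c,d) and h₂ = (a′,b′;c′,d′) be elements of GL₂(ℚ_p) with det h₁ = det h₂. Then γ̂⁻¹·ι(h₁,h₂)·γ̂ lies in GL₄(ℤ_p) and is upper triangular modulo p^β (i.e. its entries at positions (2,1), (3,1), (3,2), (4,1), (4,2), (4,3) lie in p^β·ℤ_p) if and only if h₁, h₂ ∈ GL₂(ℤ_p) and c ≡ 0, c′ ≡ 0, a ≡ a′, d ≡ d′, b′ ≡ −b (mod p^β·ℤ_p). -/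
open Matrix


noncomputable section

/-- The Weyl representative `w₁`. -/
def w1 (R : Type*) [CommRing R] : Matrix (Fin 4) (Fin 4) R :=
  !![1, 0, 0, 0;
     0, 0, 1, 0;
     0, -1, 0, 0;
     0, 0, 0, 1]

/-- The matrix `γ`. -/
def gammaMat (R : Type*) [CommRing R] : Matrix (Fin 4) (Fin 4) R :=
  !![1, 0, 0, 0;
     1, 1, 0, 0;
     0, 0, 1, 0;
     0, 0, -1, 1]

/-- The matrix `γ̂ = γ·w₁`. -/
def gammaHat (R : Type*) [CommRing R] : Matrix (Fin 4) (Fin 4) R :=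
  gammaMat R * w1 R

/-- The embedding `ι` of a pair of 2×2 matrices (with equal determinant) into 4×4 matrices. -/
def iotaMat {K : Type*} [CommRing K] (h₁ h₂ : Matrix (Fin 2) (Fin 2) K) :
    Matrix (Fin 4) (Fin 4) K :=
  !![h₁ 0 0, 0, 0, h₁ 0 1;
     0, h₂ 0 0, h₂ 0 1, 0;
     0, h₂ 1 0, h₂ 1 1, 0;
     h₁ 1 0, 0, 0, h₁ 1 1]

/-- Membership in `GL_n(ℤ_p)` for a matrix over `ℚ_p`: integral entries and unit determinant. -/
def InGLZp {p : ℕ} [Fact p.Prime] {n : ℕ} (g : Matrix (Fin n) (Fin n) ℚ_[p]) : Prop :=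
  (∀ i j, ‖g i j‖ ≤ 1) ∧ ‖g.det‖ = 1

/-!
Conjugation by `γ̂` turns `ι(h₁, h₂)` into an explicit matrix whose entries are, up to sign,
`a, b, d, a', c', d'`, `0`, and the combinations `a' - a`, `b' + b`, `c + c'`, `d - d'`, the last
four together with `c'` filling the strictly lower triangle. In an ultrametric field the closed
balls `‖x‖ ≤ 1` and `‖x‖ ≤ p^{-β}` are additive subgroups, so both conditions pass back and forth
between the two lists of entries. The determinant is `det h₁ · det h₂ = (det h₂)²`, a unit
exactly when `det h₁` and `det h₂` are.
-/

section Conjugation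

variable {R : Type*} [CommRing R]

abbrev iotaConj (h₁ h₂ : Matrix (Fin 2) (Fin 2) R) : Matrix (Fin 4) (Fin 4) R :=
  (gammaHat R)⁻¹ * iotaMat h₁ h₂ * gammaHat R

lemma gammaHat_inv :
    (gammaHat R)⁻¹ = !![1, 0, 0, 0; 0, 0, -1, 0; -1, 1, 0, 0; 0, 0, 1, 1] := by
  refine Matrix.inv_eq_right_inv ?_
  ext i j
  fin_cases i <;> fin_cases j <;> simp [gammaHat, gammaMat, w1, Matrix.mul_apply, Fin.sum_univ_four]

lemma iotaConj_eq (h₁ h₂ : Matrix (Fin 2) (Fin 2) R) :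
    iotaConj h₁ h₂ =
      !![h₁ 0 0, h₁ 0 1, 0, h₁ 0 1;
         -h₂ 1 0, h₂ 1 1, -h₂ 1 0, 0;
         h₂ 0 0 - h₁ 0 0, -h₂ 0 1 - h₁ 0 1, h₂ 0 0, -h₁ 0 1;
         h₁ 1 0 + h₂ 1 0, h₁ 1 1 - h₂ 1 1, h₂ 1 0, h₁ 1 1] := by
  rw [iotaConj, gammaHat_inv]
  ext i j
  fin_cases i <;> fin_cases j <;>
    simp [gammaHat, gammaMat, w1, iotaMat, Matrix.mul_apply, Fin.sum_univ_four] <;> ring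

lemma det_gammaHat : (gammaHat R).det = 1 := by
  simp [gammaHat, gammaMat, w1, Matrix.det_succ_row_zero, Fin.sum_univ_succ, Fin.succAbove]

lemma det_iotaMat (h₁ h₂ : Matrix (Fin 2) (Fin 2) R) :
    (iotaMat h₁ h₂).det = h₁.det * h₂.det := by
  simp [iotaMat, Matrix.det_succ_row_zero, Fin.sum_univ_succ, Fin.succAbove]
  ring

lemma det_iotaConj (h₁ h₂ : Matrix (Fin 2) (Fin 2) R) :
    (iotaConj h₁ h₂).det = h₁.det * h₂.det := by
  rw [iotaConj, Matrix.det_conj' ((Matrix.isUnit_iff_isUnit_det _).2 (by simp [det_gammaHat])),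
    det_iotaMat]

lemma iotaConj_entries_mem_iff (O P : AddSubgroup R) (h₁ h₂ : Matrix (Fin 2) (Fin 2) R) :
    let M := iotaConj h₁ h₂
    ((∀ i j, M i j ∈ O) ∧ M 1 0 ∈ P ∧ M 2 0 ∈ P ∧ M 2 1 ∈ P ∧ M 3 0 ∈ P ∧ M 3 1 ∈ P ∧ M 3 2 ∈ P) ↔
      ((∀ i j, h₁ i j ∈ O) ∧ (∀ i j, h₂ i j ∈ O) ∧ h₁ 1 0 ∈ P ∧ h₂ 1 0 ∈ P ∧
        h₁ 0 0 - h₂ 0 0 ∈ P ∧ h₁ 1 1 - h₂ 1 1 ∈ P ∧ h₂ 0 1 + h₁ 0 1 ∈ P) := by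
  simp only [iotaConj_eq, Fin.isValue, of_apply, cons_val', cons_val_fin_one, Fin.forall_fin_succ,
    cons_val_zero, cons_val_succ, forall_const, zero_mem, true_and, and_self, neg_mem_iff, and_true,
    cons_val_one, cons_val, Fin.succ_zero_eq_one, IsEmpty.forall_iff]
  have hneg : h₂ 0 1 + h₁ 0 1 = -(-h₂ 0 1 - h₁ 0 1) := by ring
  constructor
  · rintro ⟨⟨⟨ha, hb⟩, ⟨hc', hd', -⟩, ⟨-, hbb', ha', -⟩, hcc', -, -, hd⟩,
      hc'P, haa'P, hbb'P, hcc'P, hdd'P, -⟩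
    have hb' : h₂ 0 1 ∈ O := by simpa using O.neg_mem (O.add_mem hbb' hb)
    exact ⟨⟨⟨ha, hb⟩, (O.add_mem_cancel_right hc').1 hcc', hd⟩, ⟨⟨ha', hb'⟩, hc', hd'⟩,
      (P.add_mem_cancel_right hc'P).1 hcc'P, hc'P, sub_mem_comm_iff.1 haa'P, hdd'P,
      hneg ▸ P.neg_mem hbb'P⟩
  · rintro ⟨⟨⟨ha, hb⟩, hc, hd⟩, ⟨⟨ha', hb'⟩, hc', hd'⟩, hcP, hc'P, haa'P, hdd'P, hbb'P⟩
    exact ⟨⟨⟨ha, hb⟩, ⟨hc', hd', hc'⟩, ⟨sub_mem ha' ha, sub_mem (neg_mem hb') hb, ha', hb⟩,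
      add_mem hc hc', sub_mem hd hd', hc', hd⟩,
      hc'P, sub_mem_comm_iff.1 haa'P, neg_mem_iff.1 (hneg ▸ hbb'P),
      add_mem hcP hc'P, hdd'P, hc'P⟩

end Conjugation

section Normed

variable {K : Type*} [NormedField K]

lemma norm_det_iotaConj_eq_one_iff {h₁ h₂ : Matrix (Fin 2) (Fin 2) K} (hdet : h₁.det = h₂.det) :
    ‖(iotaConj h₁ h₂).det‖ = 1 ↔ ‖h₁.det‖ = 1 ∧ ‖h₂.det‖ = 1 := by
  rw [det_iotaConj, hdet, norm_mul, ← sq, pow_eq_one_iff_of_nonneg (norm_nonneg _) two_ne_zero,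
    and_self]

variable [IsUltrametricDist K]

lemma mem_closedBall_openAddSubgroup_iff {r : ℝ} (hr : 0 < r) {x : K} :
    x ∈ IsUltrametricDist.closedBall_openAddSubgroup K hr ↔ ‖x‖ ≤ r :=
  mem_closedBall_zero_iff

lemma iotaConj_norm_entries_le_iff {r : ℝ} (hr : 0 < r) (h₁ h₂ : Matrix (Fin 2) (Fin 2) K) :
    let M := iotaConj h₁ h₂
    ((∀ i j, ‖M i j‖ ≤ 1) ∧ ‖M 1 0‖ ≤ r ∧ ‖M 2 0‖ ≤ r ∧ ‖M 2 1‖ ≤ r ∧ ‖M 3 0‖ ≤ r ∧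
        ‖M 3 1‖ ≤ r ∧ ‖M 3 2‖ ≤ r) ↔
      ((∀ i j, ‖h₁ i j‖ ≤ 1) ∧ (∀ i j, ‖h₂ i j‖ ≤ 1) ∧ ‖h₁ 1 0‖ ≤ r ∧ ‖h₂ 1 0‖ ≤ r ∧
        ‖h₁ 0 0 - h₂ 0 0‖ ≤ r ∧ ‖h₁ 1 1 - h₂ 1 1‖ ≤ r ∧ ‖h₂ 0 1 + h₁ 0 1‖ ≤ r) := by
  simpa only [OpenAddSubgroup.mem_toAddSubgroup, mem_closedBall_openAddSubgroup_iff] using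
    iotaConj_entries_mem_iff
      (IsUltrametricDist.closedBall_openAddSubgroup K one_pos).toAddSubgroup
      (IsUltrametricDist.closedBall_openAddSubgroup K hr).toAddSubgroup h₁ h₂

end Normed

theorem stmt8_general (p : ℕ) [Fact p.Prime] (β : ℕ)
    (h₁ h₂ : Matrix (Fin 2) (Fin 2) ℚ_[p])
    (hdet : h₁.det = h₂.det) :
    (InGLZp ((gammaHat ℚ_[p])⁻¹ * iotaMat h₁ h₂ * gammaHat ℚ_[p]) ∧
      (‖((gammaHat ℚ_[p])⁻¹ * iotaMat h₁ h₂ * gammaHat ℚ_[p]) 1 0‖ ≤ (p : ℝ) ^ (-(β : ℤ)) ∧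
       ‖((gammaHat ℚ_[p])⁻¹ * iotaMat h₁ h₂ * gammaHat ℚ_[p]) 2 0‖ ≤ (p : ℝ) ^ (-(β : ℤ)) ∧
       ‖((gammaHat ℚ_[p])⁻¹ * iotaMat h₁ h₂ * gammaHat ℚ_[p]) 2 1‖ ≤ (p : ℝ) ^ (-(β : ℤ)) ∧
       ‖((gammaHat ℚ_[p])⁻¹ * iotaMat h₁ h₂ * gammaHat ℚ_[p]) 3 0‖ ≤ (p : ℝ) ^ (-(β : ℤ)) ∧
       ‖((gammaHat ℚ_[p])⁻¹ * iotaMat h₁ h₂ * gammaHat ℚ_[p]) 3 1‖ ≤ (p : ℝ) ^ (-(β : ℤ)) ∧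
       ‖((gammaHat ℚ_[p])⁻¹ * iotaMat h₁ h₂ * gammaHat ℚ_[p]) 3 2‖ ≤ (p : ℝ) ^ (-(β : ℤ))))
    ↔
    (InGLZp h₁ ∧ InGLZp h₂ ∧
      ‖h₁ 1 0‖ ≤ (p : ℝ) ^ (-(β : ℤ)) ∧
      ‖h₂ 1 0‖ ≤ (p : ℝ) ^ (-(β : ℤ)) ∧
      ‖h₁ 0 0 - h₂ 0 0‖ ≤ (p : ℝ) ^ (-(β : ℤ)) ∧
      ‖h₁ 1 1 - h₂ 1 1‖ ≤ (p : ℝ) ^ (-(β : ℤ)) ∧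
      ‖h₂ 0 1 + h₁ 0 1‖ ≤ (p : ℝ) ^ (-(β : ℤ))) := by
  have hr : (0 : ℝ) < (p : ℝ) ^ (-(β : ℤ)) := zpow_pos (mod_cast (Fact.out : p.Prime).pos) _
  have entries := iotaConj_norm_entries_le_iff hr h₁ h₂
  have det := norm_det_iotaConj_eq_one_iff hdet
  constructor
  · rintro ⟨⟨hM, hdetM⟩, hlower⟩
    obtain ⟨hh₁, hh₂, hcong⟩ := entries.1 ⟨hM, hlower⟩
    exact ⟨⟨hh₁, (det.1 hdetM).1⟩, ⟨hh₂, (det.1 hdetM).2⟩, hcong⟩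
  · rintro ⟨⟨hh₁, hdet₁⟩, ⟨hh₂, hdet₂⟩, hcong⟩
    obtain ⟨hM, hlower⟩ := entries.2 ⟨hh₁, hh₂, hcong⟩
    exact ⟨⟨hM, det.2 ⟨hdet₁, hdet₂⟩⟩, hlower⟩

theorem stmt8 (p : ℕ) [Fact p.Prime] (β : ℕ) (hβ : 1 ≤ β)
    (h₁ h₂ : Matrix (Fin 2) (Fin 2) ℚ_[p])
    (hu₁ : IsUnit h₁.det) (hu₂ : IsUnit h₂.det) (hdet : h₁.det = h₂.det) :
    (InGLZp ((gammaHat ℚ_[p])⁻¹ * iotaMat h₁ h₂ * gammaHat ℚ_[p]) ∧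
      (‖((gammaHat ℚ_[p])⁻¹ * iotaMat h₁ h₂ * gammaHat ℚ_[p]) 1 0‖ ≤ (p : ℝ) ^ (-(β : ℤ)) ∧
       ‖((gammaHat ℚ_[p])⁻¹ * iotaMat h₁ h₂ * gammaHat ℚ_[p]) 2 0‖ ≤ (p : ℝ) ^ (-(β : ℤ)) ∧
       ‖((gammaHat ℚ_[p])⁻¹ * iotaMat h₁ h₂ * gammaHat ℚ_[p]) 2 1‖ ≤ (p : ℝ) ^ (-(β : ℤ)) ∧
       ‖((gammaHat ℚ_[p])⁻¹ * iotaMat h₁ h₂ * gammaHat ℚ_[p]) 3 0‖ ≤ (p : ℝ) ^ (-(β : ℤ)) ∧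
       ‖((gammaHat ℚ_[p])⁻¹ * iotaMat h₁ h₂ * gammaHat ℚ_[p]) 3 1‖ ≤ (p : ℝ) ^ (-(β : ℤ)) ∧
       ‖((gammaHat ℚ_[p])⁻¹ * iotaMat h₁ h₂ * gammaHat ℚ_[p]) 3 2‖ ≤ (p : ℝ) ^ (-(β : ℤ))))
    ↔
    (InGLZp h₁ ∧ InGLZp h₂ ∧
      ‖h₁ 1 0‖ ≤ (p : ℝ) ^ (-(β : ℤ)) ∧
      ‖h₂ 1 0‖ ≤ (p : ℝ) ^ (-(β : ℤ)) ∧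
      ‖h₁ 0 0 - h₂ 0 0‖ ≤ (p : ℝ) ^ (-(β : ℤ)) ∧
      ‖h₁ 1 1 - h₂ 1 1‖ ≤ (p : ℝ) ^ (-(β : ℤ)) ∧
      ‖h₂ 0 1 + h₁ 0 1‖ ≤ (p : ℝ) ^ (-(β : ℤ))) :=
  stmt8_general p β h₁ h₂ hdet
end
end

section
/- Let p be a prime and β ≥ 1 an integer. Let h₁, h₂ ∈ GL₂(ℚ_p) with det h₁ = det h₂. If γ⁻¹·ι(h₁,h₂)·γ lies in GL₄(ℤ_p) with its entries at positions (2,1), (3,1), (4,1), (4,2), (4,3) in p^β·ℤ_p (the depth-p^β Klingen condition), then its entry at position (3,2) also lies in p^β·ℤ_p; that is, K_B(p^β) ∩ γ⁻¹·ι(H(ℚ_p))·γ = K_Kl(p^β) ∩ γ⁻¹·ι(H(ℚ_p))·γ. -/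
open Matrix

noncomputable section

lemma gammaMat_inv (R : Type*) [CommRing R] :
    (gammaMat R)⁻¹ = !![1, 0, 0, 0; -1, 1, 0, 0; 0, 0, 1, 0; 0, 0, 1, 1] := by
  rw [Matrix.inv_eq_left_inv]
  ext i j
  fin_cases i <;> fin_cases j <;>
    simp [gammaMat, Matrix.mul_apply, Fin.sum_univ_four, Matrix.one_apply, Matrix.vecHead, Matrix.vecTail]

theorem stmt10 (p : ℕ) [Fact p.Prime] (β : ℕ) (hβ : 1 ≤ β)
    (h₁ h₂ : Matrix (Fin 2) (Fin 2) ℚ_[p])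
    (hu₁ : IsUnit h₁.det) (hu₂ : IsUnit h₂.det) (hdet : h₁.det = h₂.det)
    (hInt : InGLZp ((gammaMat ℚ_[p])⁻¹ * iotaMat h₁ h₂ * gammaMat ℚ_[p]))
    -- depth-p^β Klingen condition: entries at (2,1), (3,1), (4,1), (4,2), (4,3) in p^β ℤ_p
    (h21 : ‖((gammaMat ℚ_[p])⁻¹ * iotaMat h₁ h₂ * gammaMat ℚ_[p]) 1 0‖ ≤ (p : ℝ) ^ (-(β : ℤ)))
    (h31 : ‖((gammaMat ℚ_[p])⁻¹ * iotaMat h₁ h₂ * gammaMat ℚ_[p]) 2 0‖ ≤ (p : ℝ) ^ (-(β : ℤ)))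
    (h41 : ‖((gammaMat ℚ_[p])⁻¹ * iotaMat h₁ h₂ * gammaMat ℚ_[p]) 3 0‖ ≤ (p : ℝ) ^ (-(β : ℤ)))
    (h42 : ‖((gammaMat ℚ_[p])⁻¹ * iotaMat h₁ h₂ * gammaMat ℚ_[p]) 3 1‖ ≤ (p : ℝ) ^ (-(β : ℤ)))
    (h43 : ‖((gammaMat ℚ_[p])⁻¹ * iotaMat h₁ h₂ * gammaMat ℚ_[p]) 3 2‖ ≤ (p : ℝ) ^ (-(β : ℤ))) :
    ‖((gammaMat ℚ_[p])⁻¹ * iotaMat h₁ h₂ * gammaMat ℚ_[p]) 2 1‖ ≤ (p : ℝ) ^ (-(β : ℤ)) := by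
  have key : ((gammaMat ℚ_[p])⁻¹ * iotaMat h₁ h₂ * gammaMat ℚ_[p]) 2 1
      = ((gammaMat ℚ_[p])⁻¹ * iotaMat h₁ h₂ * gammaMat ℚ_[p]) 3 1 := by
    rw [gammaMat_inv]
    simp [gammaMat, iotaMat, Matrix.mul_apply, Fin.sum_univ_four, Matrix.vecHead, Matrix.vecTail]
  rw [key]
  exact h42
end
end
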